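/- arXiv:2107.12738 — 2 statements merged into one kernel-verified Lean document; each statement's English description precedes it below -/
import Mathlib

section
/- For every linear functional φ on ℝ^d with |φ(x)| ≤ ‖x‖ for all x ∈ ℝ^d, there exist ε, δ > 0 such that for each j ∈ {0,1} and all θ ∈ 𝒞 with ‖θ − θ^{1−j}‖ ≥ ε, one has |Φ(θ)/Φ(θ^j)| ≤ exp(−δ ‖θ − θ^j‖²), where θ⁰ := (0,…,0) and θ¹ := (π,…,π). -/
open MeasureTheory ProbabilityTheory Filter Topology

noncomputable section

namespace DPoly

/-- The set of unit steps of the simple symmetric random walk on `ℤ^d`. -/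
def steps (d : ℕ) : Finset (Fin d → ℤ) :=
  (Finset.univ ×ˢ ({-1, 1} : Finset ℤ)).image fun p => Pi.single p.1 p.2

/-- Increment sequences of length `n`. -/
def paths (d n : ℕ) : Finset (Fin n → Fin d → ℤ) :=
  Fintype.piFinset fun _ => steps d

/-- `q d t z`: the `t`-step transition probability of the simple symmetric
random walk on `ℤ^d` from `0` to `z`, i.e. `(2d)⁻ᵗ` times the number of
nearest-neighbour paths of length `t` from `0` to `z`. -/
def q (d t : ℕ) (z : Fin d → ℤ) : ℝ :=
  ((paths d t).filter fun δ => ∑ j, δ j = z).card / (2 * d) ^ t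

/-- Euclidean norm of a real vector. -/
def enormR {d : ℕ} (x : Fin d → ℝ) : ℝ := Real.sqrt (∑ i, x i ^ 2)

/-- Euclidean norm of an integer vector. -/
def enormZ {d : ℕ} (x : Fin d → ℤ) : ℝ := enormR fun i => (x i : ℝ)

/-- `1`-norm of an integer vector. -/
def onormZ {d : ℕ} (x : Fin d → ℤ) : ℤ := ∑ i, |x i|

/-- `α_d = ∑_{t ≥ 1} ∑_z (q_t^z)²`. -/
def alphaD (d : ℕ) : ℝ := ∑' t : ℕ, ∑' z : Fin d → ℤ, q d (t + 1) z ^ 2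

variable {Ω : Type*} [MeasureSpace Ω] {d : ℕ}

/-- `c(β) = ⟨exp (β ξ(0,0))⟩`. -/
def cB (ξ : (Fin d → ℤ) → ℤ → Ω → ℝ) (β : ℝ) : ℝ := ∫ ω, Real.exp (β * ξ 0 0 ω)

/-- `λ = c(2β)/c(β)² - 1`. -/
def lam (ξ : (Fin d → ℤ) → ℤ → Ω → ℝ) (β : ℝ) : ℝ := cB ξ (2 * β) / cB ξ β ^ 2 - 1

/-- `h(z,i) = (exp (β ξ(z,i)) - c(β))/c(β)`. -/
def hfun (ξ : (Fin d → ℤ) → ℤ → Ω → ℝ) (β : ℝ) (z : Fin d → ℤ) (i : ℤ) (ω : Ω) : ℝ :=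
  (Real.exp (β * ξ z i ω) - cB ξ β) / cB ξ β

/-- Position after `j` steps of the walk with increments `δ` started at `x`. -/
def pos (x : Fin d → ℤ) {n : ℕ} (δ : Fin n → Fin d → ℤ) (j : ℕ) : Fin d → ℤ :=
  x + ∑ k ∈ Finset.univ.filter fun k : Fin n => (k : ℕ) < j, δ k

/-- The point-to-point partition function `Z_{x,s}^{y,t}`; it equals
`c(β)^{-(t-s+1)} q_{t-s}^{y-x} E_{x,s}^{y,t}[exp (β ∑_{j=s}^t ξ(γ_j,j))]`,
the conditional expectation being the uniform average over all
nearest-neighbour paths from `(x,s)` to `(y,t)`. -/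
def Zpp (ξ : (Fin d → ℤ) → ℤ → Ω → ℝ) (β : ℝ) (x : Fin d → ℤ) (s : ℤ) (y : Fin d → ℤ)
    (t : ℤ) (ω : Ω) : ℝ :=
  (cB ξ β ^ ((t - s).toNat + 1))⁻¹ * ((2 * d : ℝ) ^ (t - s).toNat)⁻¹ *
    ∑ δ ∈ (paths d (t - s).toNat).filter fun δ => x + ∑ j, δ j = y,
      Real.exp (β * ∑ j ∈ Finset.range ((t - s).toNat + 1), ξ (pos x δ j) (s + j) ω)

/-- `Z_{x,s}^t = ∑_y Z_{x,s}^{y,t}`. -/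
def Zfwd (ξ : (Fin d → ℤ) → ℤ → Ω → ℝ) (β : ℝ) (x : Fin d → ℤ) (s : ℤ) (t : ℤ) (ω : Ω) : ℝ :=
  ∑' y : Fin d → ℤ, Zpp ξ β x s y t ω

/-- `Z_s^{y,t} = ∑_x Z_{x,s}^{y,t}`. -/
def Zbwd (ξ : (Fin d → ℤ) → ℤ → Ω → ℝ) (β : ℝ) (s : ℤ) (y : Fin d → ℤ) (t : ℤ) (ω : Ω) : ℝ :=
  ∑' x : Fin d → ℤ, Zpp ξ β x s y t ω

end DPoly
namespace DPoly

/-- `Φ(θ)`: the characteristic-type function of one step of the simple symmetric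
random walk tilted by `e^φ`. -/
def PhiFn (d : ℕ) (φ : (Fin d → ℝ) →ₗ[ℝ] ℝ) (θ : Fin d → ℝ) : ℂ :=
  (1 / (2 * d) : ℂ) * ∑ j : Fin d,
    (Complex.exp (Complex.I * (θ j : ℂ)) * (Real.exp (φ (Pi.single j 1)) : ℂ) +
      Complex.exp (-(Complex.I * (θ j : ℂ))) * (Real.exp (-φ (Pi.single j 1)) : ℂ))

/-- The cube `𝒞 = (-π/2, 3π/2]^d`. -/
def cube (d : ℕ) : Set (Fin d → ℝ) :=
  Set.univ.pi fun _ => Set.Ioc (-(Real.pi / 2)) (3 * Real.pi / 2)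

/-- `θ⁰ = (0,…,0)` and `θ¹ = (π,…,π)`. -/
def thetaVert (d : ℕ) (j : Fin 2) : Fin d → ℝ := fun _ => (j : ℕ) * Real.pi

end DPoly

/-!
With `aₖ := φ(eₖ)` we have `|aₖ| ≤ 1` and `d·Φ(θ) = ∑ₖ (cos θₖ cosh aₖ + i sin θₖ sinh aₖ)`. The
`k`-th summand has modulus `√(cosh² aₖ - sin² θₖ) ≤ cosh aₖ - sin² θₖ / 4`, while at both vertices
`d·|Φ| = ∑ₖ cosh aₖ =: C`. Hence `|Φ(θ)/Φ(θʲ)| ≤ 1 - S / (4C)` with `S = ∑ₖ sin² θₖ`, which settles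
every `θ` with `S ≥ 1/4`, since `‖θ - θʲ‖² ≤ 25d` on the cube. If `S < 1/4`, each `θₖ` is within
`π/2` of `0` or of `π`. When all of them are close to the same value, Jordan's inequality gives
`S ≥ (2/5)‖θ - θⁱ‖²`, and `i = j` because `‖θ - θ¹⁻ʲ‖ ≥ 1`. Otherwise some `cos θₖ` is
nonpositive and some is nonnegative, which costs the real part at least `1` against `C`, while the
imaginary part is at most `√(3dS)` by Cauchy–Schwarz; for `d ≥ 3` this gives `d·|Φ(θ)| ≤ C - 1/2`.
-/

open Finset Real

namespace DPoly

variable {d : ℕ}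

lemma enormR_sq (x : Fin d → ℝ) : enormR x ^ 2 = ∑ k, x k ^ 2 :=
  sq_sqrt (sum_nonneg fun _ _ => sq_nonneg _)

lemma enormR_single (k : Fin d) : enormR (Pi.single k (1 : ℝ)) = 1 := by
  rw [enormR, sum_eq_single k (fun i _ hik => by simp [Pi.single_eq_of_ne hik]) (by simp)]
  simp

lemma exp_mul_I_mul_exp_add (x a : ℝ) :
    Complex.exp (Complex.I * x) * (exp a : ℂ) + Complex.exp (-(Complex.I * x)) * (exp (-a) : ℂ) =
      2 * ⟨cos x * cosh a, sin x * sinh a⟩ := by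
  rw [Complex.mk_eq_add_mul_I, mul_comm Complex.I, ← neg_mul, Complex.exp_mul_I,
    Complex.exp_mul_I, Complex.cos_neg, Complex.sin_neg]
  push_cast [cosh_eq, sinh_eq]
  ring

def tiltSum (a θ : Fin d → ℝ) : ℂ := ∑ k, ⟨cos (θ k) * cosh (a k), sin (θ k) * sinh (a k)⟩

def coshSum (a : Fin d → ℝ) : ℝ := ∑ k, cosh (a k)

lemma PhiFn_eq_tiltSum (φ : (Fin d → ℝ) →ₗ[ℝ] ℝ) (θ : Fin d → ℝ) :
    PhiFn d φ θ = (d : ℂ)⁻¹ * tiltSum (fun k => φ (Pi.single k 1)) θ := by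
  simp_rw [PhiFn, exp_mul_I_mul_exp_add, ← mul_sum, tiltSum]
  ring

lemma tiltSum_thetaVert (a : Fin d → ℝ) (j : Fin 2) :
    tiltSum a (thetaVert d j) = (((-1) ^ (j : ℕ) * coshSum a : ℝ) : ℂ) := by
  rw [tiltSum, coshSum, mul_sum, Complex.ofReal_sum]
  refine sum_congr rfl fun k _ => ?_
  simp only [thetaVert, cos_nat_mul_pi, sin_nat_mul_pi, zero_mul]
  rfl

lemma card_le_coshSum (a : Fin d → ℝ) : (d : ℝ) ≤ coshSum a := by
  rw [coshSum]
  simpa using sum_le_sum fun k (_ : k ∈ univ) => one_le_cosh (a k)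

lemma cosh_le_two {x : ℝ} (hx : |x| ≤ 1) : cosh x ≤ 2 := by
  have h1 : cosh x ≤ cosh 1 := cosh_le_cosh.2 (by rwa [abs_one])
  have h2 : cosh 1 = (exp 1 + exp (-1)) / 2 := cosh_eq 1
  linarith [exp_one_lt_three, exp_neg_one_lt_half]

lemma coshSum_le (a : Fin d → ℝ) (ha : ∀ k, cosh (a k) ≤ 2) : coshSum a ≤ 2 * d := by
  rw [coshSum]
  simpa [mul_comm] using sum_le_sum fun k (_ : k ∈ univ) => ha k

lemma norm_tiltSum_thetaVert (a : Fin d → ℝ) (j : Fin 2) :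
    ‖tiltSum a (thetaVert d j)‖ = coshSum a := by
  rw [tiltSum_thetaVert, Complex.norm_real, norm_mul, norm_pow, norm_neg, norm_one, one_pow,
    one_mul, Real.norm_of_nonneg ((Nat.cast_nonneg d).trans (card_le_coshSum a))]

lemma norm_mk_le_cosh_sub {x a : ℝ} (ha : cosh a ≤ 2) :
    ‖(⟨cos x * cosh a, sin x * sinh a⟩ : ℂ)‖ ≤ cosh a - sin x ^ 2 / 4 := by
  have hsin := sin_sq_le_one x
  have hcosh := one_le_cosh a
  rw [← sq_le_sq₀ (norm_nonneg _) (by linarith), Complex.sq_norm, Complex.normSq_mk]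
  nlinarith [sin_sq_add_cos_sq x, cosh_sq a, sq_nonneg (sin x)]

lemma norm_tiltSum_le_coshSum_sub (a θ : Fin d → ℝ) (ha : ∀ k, cosh (a k) ≤ 2) :
    ‖tiltSum a θ‖ ≤ coshSum a - (∑ k, sin (θ k) ^ 2) / 4 := by
  rw [coshSum, sum_div, ← sum_sub_distrib]
  exact (norm_sum_le _ _).trans (sum_le_sum fun k _ => norm_mk_le_cosh_sub (ha k))

lemma le_sum_mul_cosh (a g : Fin d → ℝ) (hg : ∀ k, 0 ≤ g k) (k₀ : Fin d) :
    g k₀ ≤ ∑ k, g k * cosh (a k) :=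
  (le_mul_of_one_le_right (hg k₀) (one_le_cosh _)).trans
    (single_le_sum (fun k _ => mul_nonneg (hg k) (cosh_pos _).le) (mem_univ k₀))

lemma norm_tiltSum_le_coshSum_sub_half (hd : 3 ≤ d) (a θ : Fin d → ℝ)
    (ha : ∀ k, cosh (a k) ≤ 2) (hS : ∑ k, sin (θ k) ^ 2 ≤ 1 / 4) {k₀ k₁ : Fin d}
    (h₀ : cos (θ k₀) ≤ 0) (h₁ : 0 ≤ cos (θ k₁)) :
    ‖tiltSum a θ‖ ≤ coshSum a - 1 / 2 := by
  set z := tiltSum a θ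
  have hre : coshSum a - z.re = ∑ k, (1 - cos (θ k)) * cosh (a k) := by
    simp [z, tiltSum, coshSum, Complex.re_sum, sub_mul]
  have hre' : coshSum a + z.re = ∑ k, (1 + cos (θ k)) * cosh (a k) := by
    simp [z, tiltSum, coshSum, Complex.re_sum, add_mul, sum_add_distrib]
  have hre_le : z.re ≤ coshSum a - 1 := by
    have hg k : 0 ≤ 1 - cos (θ k) := by linarith [cos_le_one (θ k)]
    linarith [le_sum_mul_cosh a _ hg k₀]
  have hre_ge : -(coshSum a - 1) ≤ z.re := by
    have hg k : 0 ≤ 1 + cos (θ k) := by linarith [neg_one_le_cos (θ k)]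
    linarith [le_sum_mul_cosh a _ hg k₁]
  have hsinh : ∑ k, sinh (a k) ^ 2 ≤ 3 * d := by
    have h : ∀ k ∈ univ, sinh (a k) ^ 2 ≤ 3 := fun k _ => by
      nlinarith [cosh_sq (a k), ha k, one_le_cosh (a k)]
    simpa [mul_comm] using sum_le_sum h
  have him : z.im ^ 2 ≤ 3 * d * ∑ k, sin (θ k) ^ 2 := by
    have hcs := sum_mul_sq_le_sq_mul_sq univ (fun k => sinh (a k)) fun k => sin (θ k)
    simp only [z, tiltSum, Complex.im_sum, mul_comm (sin _)] at hcs ⊢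
    nlinarith [sum_nonneg fun k (_ : k ∈ univ) => sq_nonneg (sin (θ k))]
  have hd' : (3 : ℝ) ≤ d := by exact_mod_cast hd
  have hC := card_le_coshSum a
  rw [← sq_le_sq₀ (norm_nonneg _) (by linarith), Complex.sq_norm, Complex.normSq_apply]
  nlinarith [sq_le_sq' hre_ge hre_le]

lemma two_fifths_mul_sq_le_sin_sq {x : ℝ} (hx : |x| ≤ π / 2) : 2 / 5 * x ^ 2 ≤ sin x ^ 2 := by
  have hπ : 2 / 5 ≤ (2 / π) ^ 2 := by
    rw [div_pow, le_div_iff₀ (by positivity)]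
    nlinarith [pi_lt_d2, pi_pos]
  have hJordan := mul_abs_le_abs_sin hx
  calc 2 / 5 * x ^ 2 ≤ (2 / π) ^ 2 * |x| ^ 2 := by rw [sq_abs]; gcongr
    _ = (2 / π * |x|) ^ 2 := by ring
    _ ≤ |sin x| ^ 2 := by gcongr
    _ = sin x ^ 2 := sq_abs _

lemma two_fifths_mul_enormR_sq_le {θ : Fin d → ℝ} {i : Fin 2}
    (hθ : ∀ k, |θ k - thetaVert d i k| ≤ π / 2) :
    2 / 5 * enormR (θ - thetaVert d i) ^ 2 ≤ ∑ k, sin (θ k) ^ 2 := by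
  rw [enormR_sq, mul_sum]
  refine sum_le_sum fun k _ => ?_
  have h := two_fifths_mul_sq_le_sin_sq (hθ k)
  rwa [thetaVert, sin_sub_nat_mul_pi, mul_pow, ← pow_mul, pow_mul', neg_one_sq, one_pow,
    one_mul] at h

lemma enormR_sub_thetaVert_sq_le {θ : Fin d → ℝ} (hθ : θ ∈ cube d) (j : Fin 2) :
    enormR (θ - thetaVert d j) ^ 2 ≤ 25 * d := by
  rw [enormR_sq]
  have h : ∀ k ∈ univ, (θ - thetaVert d j) k ^ 2 ≤ 25 := fun k _ => by
    obtain ⟨hlo, hhi⟩ := Set.mem_univ_pi.1 hθ k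
    have hj : ((j : ℕ) : ℝ) ≤ 1 := by exact_mod_cast Nat.lt_succ_iff.1 j.isLt
    have hjπ : ((j : ℕ) : ℝ) * π ≤ π := mul_le_of_le_one_left pi_pos.le hj
    have hjπ' : 0 ≤ ((j : ℕ) : ℝ) * π := by positivity
    simp only [Pi.sub_apply, thetaVert]
    nlinarith [pi_lt_d2]
  simpa [mul_comm] using sum_le_sum h

lemma near_thetaVert_or_cos_nonpos_and_nonneg {θ : Fin d → ℝ} (hθ : θ ∈ cube d) :
    (∃ i : Fin 2, ∀ k, |θ k - thetaVert d i k| ≤ π / 2) ∨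
      ∃ k₀ k₁, cos (θ k₀) ≤ 0 ∧ 0 ≤ cos (θ k₁) := by
  have hbounds k := Set.mem_univ_pi.1 hθ k
  by_cases hpos : ∀ k, 0 < cos (θ k)
  · refine Or.inl ⟨0, fun k => ?_⟩
    obtain ⟨hlo, hhi⟩ := hbounds k
    have : θ k < π / 2 := by
      by_contra! h
      exact (cos_nonpos_of_pi_div_two_le_of_le h (by linarith)).not_gt (hpos k)
    simp only [thetaVert, Fin.val_zero, Nat.cast_zero, zero_mul, sub_zero, abs_le]
    constructor <;> linarith
  by_cases hneg : ∀ k, cos (θ k) < 0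
  · refine Or.inl ⟨1, fun k => ?_⟩
    obtain ⟨hlo, hhi⟩ := hbounds k
    have : π / 2 < θ k := by
      by_contra! h
      exact (cos_nonneg_of_mem_Icc ⟨hlo.le, h⟩).not_gt (hneg k)
    simp only [thetaVert, Fin.val_one, Nat.cast_one, one_mul, abs_le]
    constructor <;> linarith
  push Not at hpos hneg
  obtain ⟨k₀, h₀⟩ := hpos
  obtain ⟨k₁, h₁⟩ := hneg
  exact Or.inr ⟨k₀, k₁, h₀, h₁⟩

lemma norm_tiltSum_le {a θ : Fin d → ℝ} (hd : 3 ≤ d) (ha : ∀ k, cosh (a k) ≤ 2)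
    (hθ : θ ∈ cube d) {j : Fin 2} (hfar : 1 ≤ enormR (θ - thetaVert d (1 - j))) :
    ‖tiltSum a θ‖ ≤ coshSum a - enormR (θ - thetaVert d j) ^ 2 / (400 * d) := by
  set A := enormR (θ - thetaVert d j) ^ 2
  set S := ∑ k, sin (θ k) ^ 2
  have hd' : (3 : ℝ) ≤ d := by exact_mod_cast hd
  have hA : A / (400 * d) ≤ 1 / 16 := by
    rw [div_le_iff₀ (by positivity)]
    linarith [enormR_sub_thetaVert_sq_le hθ j]
  by_cases hS : 1 / 4 ≤ S
  · linarith [norm_tiltSum_le_coshSum_sub a θ ha]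
  push Not at hS
  rcases near_thetaVert_or_cos_nonpos_and_nonneg hθ with ⟨i, hi⟩ | ⟨k₀, k₁, h₀, h₁⟩
  · have hJ := two_fifths_mul_enormR_sq_le hi
    obtain rfl | rfl : i = j ∨ i = 1 - j := by omega
    · have : A / (400 * d) ≤ A / 10 := by
        gcongr
        linarith
      linarith [norm_tiltSum_le_coshSum_sub a θ ha]
    · nlinarith
  · linarith [norm_tiltSum_le_coshSum_sub_half hd a θ ha hS.le h₀ h₁]

end DPoly

open DPoly in
/-- Gaussian-type bound on the tilted characteristic function away from the
two maximizers `θ⁰ = (0,…,0)` and `θ¹ = (π,…,π)` (Claim A.2). -/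
theorem statement18 (d : ℕ) (hd : 3 ≤ d) (φ : (Fin d → ℝ) →ₗ[ℝ] ℝ)
    (hφ : ∀ x : Fin d → ℝ, |φ x| ≤ enormR x) :
    ∃ ε > (0 : ℝ), ∃ δ > (0 : ℝ), ∀ j : Fin 2, ∀ θ : Fin d → ℝ, θ ∈ cube d →
      ε ≤ enormR (θ - thetaVert d (1 - j)) →
      ‖PhiFn d φ θ / PhiFn d φ (thetaVert d j)‖ ≤
        Real.exp (-δ * enormR (θ - thetaVert d j) ^ 2) := by
  set a : Fin d → ℝ := fun k => φ (Pi.single k 1)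
  have ha k : cosh (a k) ≤ 2 := cosh_le_two (by simpa [enormR_single] using hφ (Pi.single k 1))
  have hd' : (0 : ℝ) < d := by exact_mod_cast (by omega : 0 < d)
  have hC : 0 < coshSum a := hd'.trans_le (card_le_coshSum a)
  refine ⟨1, one_pos, 1 / (800 * d ^ 2), by positivity, fun j θ hθ hfar => ?_⟩
  set A := enormR (θ - thetaVert d j) ^ 2
  have hA : 0 ≤ A := sq_nonneg _
  rw [PhiFn_eq_tiltSum, PhiFn_eq_tiltSum, mul_div_mul_left _ _ (by simpa using hd'.ne'),
    norm_div, norm_tiltSum_thetaVert]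
  calc ‖tiltSum a θ‖ / coshSum a ≤ 1 - A / (400 * d * coshSum a) := by
        have hcancel : A / (400 * d * coshSum a) * coshSum a = A / (400 * d) := by field_simp
        rw [div_le_iff₀ hC, sub_mul, hcancel]
        linarith [norm_tiltSum_le hd ha hθ hfar]
    _ ≤ exp (-(A / (400 * d * coshSum a))) := one_sub_le_exp_neg _
    _ ≤ exp (-(1 / (800 * d ^ 2)) * A) := by
        rw [neg_mul, exp_le_exp, neg_le_neg_iff, one_div_mul_eq_div]
        refine div_le_div_of_nonneg_left hA (by positivity) ?_
        nlinarith [coshSum_le a ha]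
end
end

section
/- Let d ≥ 3. There is a constant c > 0 such that for every t ∈ ℕ, every l ∈ ℕ₀, and every M > 0, the sum of Π_{j=1}^{l+1} t_j^{−d/2} over all positive integers t₁, …, t_{l+1} satisfying t₁ + ⋯ + t_{l+1} = t and t_j ≥ M for every j is at most (c^l / M^{l(d/2 − 1)}) t^{−d/2}. -/
/-!
Split off the first part: a composition of `t` into `l + 2` parts is a pair `u + v = t` followed
by a composition of `v` into `l + 1` parts, so by induction the sum is bounded by `C^l / M^{l(p-1)}`
times the convolution `∑_{u + v = t} u^{-p} v^{-p}` over `u, v ≥ M`. One of `u, v` is at least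
`t/2`, so each term is at most `2^p t^{-p} (u^{-p} + v^{-p})`, and the tail `∑_{n ≥ M} n^{-p}` is
`O(M^{1-p})` by comparison with `∫_M^∞ x^{-p} dx` (here `p = d/2 > 1`).
-/

open MeasureTheory ProbabilityTheory Filter Topology

noncomputable section

open Finset

theorem sum_Ico_rpow_neg_succ_le {p : ℝ} (hp : 1 < p) {a : ℕ} (ha : 0 < a) (b : ℕ) :
    ∑ i ∈ Ico a b, ((i + 1 : ℕ) : ℝ) ^ (-p) ≤ (a : ℝ) ^ (1 - p) / (p - 1) := by
  have ha' : (0 : ℝ) < a := by exact_mod_cast ha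
  rcases le_or_gt a b with hab | hba
  · have hanti : AntitoneOn (fun x : ℝ => x ^ (-p)) (Set.Icc (a : ℝ) b) :=
      fun x hx y _ hxy => Real.rpow_le_rpow_of_nonpos (ha'.trans_le hx.1) hxy (by linarith)
    have hint :
        ∫ x in (a : ℝ)..b, x ^ (-p) = ((a : ℝ) ^ (1 - p) - (b : ℝ) ^ (1 - p)) / (p - 1) := by
      rw [integral_rpow (Or.inr ⟨by linarith, fun h0 => ?_⟩)]
      · rw [show -p + 1 = 1 - p by ring, ← neg_sub p 1, div_neg, ← neg_div, neg_sub]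
      · rw [Set.uIcc_of_le (by exact_mod_cast hab)] at h0
        exact absurd h0.1 (not_le.2 ha')
    calc ∑ i ∈ Ico a b, ((i + 1 : ℕ) : ℝ) ^ (-p)
        ≤ ∫ x in (a : ℝ)..b, x ^ (-p) := hanti.sum_le_integral_Ico hab
      _ ≤ (a : ℝ) ^ (1 - p) / (p - 1) := by
        rw [hint]
        exact div_le_div_of_nonneg_right (sub_le_self _ (by positivity)) (by linarith)
  · rw [Ico_eq_empty_of_le hba.le, sum_empty]
    exact div_nonneg (by positivity) (by linarith)

theorem tail_sum_rpow_neg_le_nat {p : ℝ} (hp : 1 < p) {m : ℕ} (hm : 0 < m) {s : Finset ℕ}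
    (hs : ∀ n ∈ s, m ≤ n) :
    ∑ n ∈ s, (n : ℝ) ^ (-p) ≤ p / (p - 1) * (m : ℝ) ^ (1 - p) := by
  set N := s.sup id
  have hsub : s ⊆ Ico m (N + 1) := fun n hn =>
    mem_Ico.2 ⟨hs n hn, Nat.lt_succ_of_le (le_sup (f := id) hn)⟩
  rcases s.eq_empty_or_nonempty with rfl | ⟨n, hn⟩
  · rw [sum_empty]; exact mul_nonneg (div_nonneg (by linarith) (by linarith)) (by positivity)
  have hmN : m < N + 1 := (mem_Ico.1 (hsub hn)).1.trans_lt (mem_Ico.1 (hsub hn)).2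
  calc ∑ n ∈ s, (n : ℝ) ^ (-p)
      ≤ ∑ n ∈ Ico m (N + 1), (n : ℝ) ^ (-p) :=
        sum_le_sum_of_subset_of_nonneg hsub fun _ _ _ => by positivity
    _ = (m : ℝ) ^ (-p) + ∑ i ∈ Ico m N, ((i + 1 : ℕ) : ℝ) ^ (-p) := by
        rw [sum_eq_sum_Ico_succ_bot hmN, sum_Ico_add' (fun n : ℕ => (n : ℝ) ^ (-p))]
    _ ≤ (m : ℝ) ^ (1 - p) + (m : ℝ) ^ (1 - p) / (p - 1) := by
        gcongr
        · exact_mod_cast hm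
        · linarith
        · exact sum_Ico_rpow_neg_succ_le hp hm _
    _ = p / (p - 1) * (m : ℝ) ^ (1 - p) := by
        field_simp [show p - 1 ≠ 0 by linarith]
        ring

theorem tail_sum_rpow_neg_le {p : ℝ} (hp : 1 < p) {M : ℝ} (hM : 0 < M) {s : Finset ℕ}
    (hs : ∀ n ∈ s, M ≤ n) :
    ∑ n ∈ s, (n : ℝ) ^ (-p) ≤ p / (p - 1) * M ^ (1 - p) := by
  have hceil : 0 < ⌈M⌉₊ := Nat.ceil_pos.2 hM
  calc ∑ n ∈ s, (n : ℝ) ^ (-p)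
      ≤ p / (p - 1) * (⌈M⌉₊ : ℝ) ^ (1 - p) :=
        tail_sum_rpow_neg_le_nat hp hceil fun n hn => Nat.ceil_le.2 (hs n hn)
    _ ≤ p / (p - 1) * M ^ (1 - p) := by
        refine mul_le_mul_of_nonneg_left ?_ (div_nonneg (by linarith) (by linarith))
        exact Real.rpow_le_rpow_of_nonpos hM (Nat.le_ceil M) (by linarith)

theorem rpow_neg_mul_rpow_neg_le {p a b : ℝ} (hp : 0 ≤ p) (ha : 0 < a) (hb : 0 < b) :
    a ^ (-p) * b ^ (-p) ≤ 2 ^ p * (a + b) ^ (-p) * (a ^ (-p) + b ^ (-p)) := by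
  wlog hab : a ≤ b generalizing a b
  · rw [mul_comm, add_comm a, add_comm (a ^ (-p))]
    exact this hb ha (le_of_not_ge hab)
  have hb' : b ^ (-p) ≤ 2 ^ p * (a + b) ^ (-p) := by
    calc b ^ (-p) ≤ ((a + b) / 2) ^ (-p) :=
          Real.rpow_le_rpow_of_nonpos (by positivity) (by linarith) (by linarith)
      _ = 2 ^ p * (a + b) ^ (-p) := by
          rw [Real.div_rpow (by positivity) zero_le_two, Real.rpow_neg zero_le_two, div_inv_eq_mul,
            mul_comm]
  calc a ^ (-p) * b ^ (-p) ≤ a ^ (-p) * (2 ^ p * (a + b) ^ (-p)) := by gcongr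
    _ ≤ 2 ^ p * (a + b) ^ (-p) * (a ^ (-p) + b ^ (-p)) := by
        rw [mul_comm]
        gcongr
        exact le_add_of_nonneg_right (by positivity)

theorem sum_antidiagonal_rpow_neg_mul_le {p : ℝ} (hp : 1 < p) {M : ℝ} (hM : 0 < M) (t : ℕ) :
    ∑ x ∈ (antidiagonal t).filter (fun x => M ≤ x.1 ∧ M ≤ x.2),
      (x.1 : ℝ) ^ (-p) * (x.2 : ℝ) ^ (-p) ≤
        2 * 2 ^ p * (p / (p - 1)) * M ^ (1 - p) * (t : ℝ) ^ (-p) := by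
  set S := (antidiagonal t).filter (fun x => M ≤ x.1 ∧ M ≤ x.2)
  have hmem : ∀ x ∈ S, x.1 + x.2 = t ∧ M ≤ x.1 ∧ M ≤ x.2 := fun x hx => by
    simpa [S] using hx
  have htail : ∀ g : ℕ × ℕ → ℕ, (∀ x ∈ S, M ≤ g x) → Set.InjOn g S →
      ∑ x ∈ S, ((g x : ℕ) : ℝ) ^ (-p) ≤ p / (p - 1) * M ^ (1 - p) := fun g hg hinj => by
    rw [← sum_image (f := fun n : ℕ => (n : ℝ) ^ (-p)) hinj]
    exact tail_sum_rpow_neg_le hp hM fun n hn => by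
      obtain ⟨x, hx, rfl⟩ := mem_image.1 hn; exact hg x hx
  calc ∑ x ∈ S, (x.1 : ℝ) ^ (-p) * (x.2 : ℝ) ^ (-p)
      ≤ ∑ x ∈ S, 2 ^ p * (t : ℝ) ^ (-p) * ((x.1 : ℝ) ^ (-p) + (x.2 : ℝ) ^ (-p)) := by
        refine sum_le_sum fun x hx => ?_
        obtain ⟨hsum, h1, h2⟩ := hmem x hx
        have := rpow_neg_mul_rpow_neg_le (p := p) (by linarith) (hM.trans_le h1) (hM.trans_le h2)
        rwa [← Nat.cast_add, hsum] at this
    _ = 2 ^ p * (t : ℝ) ^ (-p) * (∑ x ∈ S, (x.1 : ℝ) ^ (-p) + ∑ x ∈ S, (x.2 : ℝ) ^ (-p)) := by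
        rw [← mul_sum, sum_add_distrib]
    _ ≤ 2 ^ p * (t : ℝ) ^ (-p) * (p / (p - 1) * M ^ (1 - p) + p / (p - 1) * M ^ (1 - p)) := by
        gcongr
        · exact htail Prod.fst (fun x hx => (hmem x hx).2.1) fun x hx y hy (hxy : x.1 = y.1) =>
            Prod.ext hxy (by have := (hmem x hx).1; have := (hmem y hy).1; omega)
        · exact htail Prod.snd (fun x hx => (hmem x hx).2.2) fun x hx y hy (hxy : x.2 = y.2) =>
            Prod.ext (by have := (hmem x hx).1; have := (hmem y hy).1; omega) hxy
    _ = 2 * 2 ^ p * (p / (p - 1)) * M ^ (1 - p) * (t : ℝ) ^ (-p) := by ring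

def compositionsGE (k t : ℕ) (M : ℝ) : Finset (Fin k → ℕ) :=
  (Fintype.piFinset fun _ : Fin k => Finset.range (t + 1)).filter
    (fun f => (∀ j, 1 ≤ f j) ∧ (∑ j, f j) = t ∧ ∀ j, M ≤ (f j : ℝ))

theorem mem_compositionsGE {k t : ℕ} {M : ℝ} (hM : 0 < M) {f : Fin k → ℕ} :
    f ∈ compositionsGE k t M ↔ ∑ j, f j = t ∧ ∀ j, M ≤ (f j : ℝ) := by
  refine ⟨fun hf => (mem_filter.1 hf).2.2, fun ⟨hsum, hM'⟩ => mem_filter.2 ⟨?_, ?_, hsum, hM'⟩⟩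
  · exact Fintype.mem_piFinset.2 fun j => mem_range.2 <| Nat.lt_succ_of_le <|
      hsum ▸ single_le_sum (fun _ _ => Nat.zero_le _) (mem_univ j)
  · exact fun j => (Nat.ceil_pos.2 hM).trans_le (Nat.ceil_le.2 (hM' j))

theorem compositionsGE_succ_succ_subset (k t : ℕ) {M : ℝ} (hM : 0 < M) :
    compositionsGE (k + 2) t M ⊆
      (((antidiagonal t).filter (fun x => M ≤ x.1 ∧ M ≤ x.2)).sigma
        fun x => compositionsGE (k + 1) x.2 M).image fun σ => Fin.cons σ.1.1 σ.2 := by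
  intro f hf
  obtain ⟨hsum, hfM⟩ := (mem_compositionsGE hM).1 hf
  rw [Fin.sum_univ_succ] at hsum
  refine mem_image.2
    ⟨⟨(f 0, ∑ j, Fin.tail f j), Fin.tail f⟩, mem_sigma.2 ⟨?_, ?_⟩, Fin.cons_self_tail f⟩
  · refine mem_filter.2 ⟨mem_antidiagonal.2 hsum, hfM 0, (hfM 1).trans ?_⟩
    exact_mod_cast single_le_sum (f := Fin.tail f) (fun _ _ => Nat.zero_le _) (mem_univ 0)
  · exact (mem_compositionsGE hM).2 ⟨rfl, fun j => hfM j.succ⟩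

theorem sum_compositionsGE_prod_rpow_neg_le {p : ℝ} (hp : 1 < p) {M : ℝ} (hM : 0 < M) (l t : ℕ) :
    ∑ f ∈ compositionsGE (l + 1) t M, ∏ j, (f j : ℝ) ^ (-p) ≤
      (2 * 2 ^ p * (p / (p - 1))) ^ l / M ^ ((l : ℝ) * (p - 1)) * (t : ℝ) ^ (-p) := by
  induction l generalizing t with
  | zero =>
    have hsub : compositionsGE 1 t M ⊆ {fun _ => t} := fun f hf => by
      have hsum := ((mem_compositionsGE hM).1 hf).1
      rw [Fin.sum_univ_one] at hsum
      exact mem_singleton.2 (funext fun j => Subsingleton.elim j 0 ▸ hsum)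
    calc ∑ f ∈ compositionsGE 1 t M, ∏ j, (f j : ℝ) ^ (-p)
        ≤ ∑ f ∈ {fun _ => t}, ∏ j : Fin 1, (f j : ℝ) ^ (-p) :=
          sum_le_sum_of_subset_of_nonneg hsub fun _ _ _ => by positivity
      _ = _ := by simp
  | succ l ih =>
    set c := 2 * 2 ^ p * (p / (p - 1))
    set S := (antidiagonal t).filter (fun x => M ≤ x.1 ∧ M ≤ x.2)
    calc ∑ f ∈ compositionsGE (l + 2) t M, ∏ j, (f j : ℝ) ^ (-p)
        ≤ ∑ σ ∈ S.sigma fun x => compositionsGE (l + 1) x.2 M,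
            ∏ j, ((Fin.cons σ.1.1 σ.2 : Fin (l + 2) → ℕ) j : ℝ) ^ (-p) :=
          (sum_le_sum_of_subset_of_nonneg (compositionsGE_succ_succ_subset l t hM)
            fun _ _ _ => by positivity).trans (sum_image_le_of_nonneg fun _ _ => by positivity)
      _ = ∑ x ∈ S, (x.1 : ℝ) ^ (-p) *
            ∑ g ∈ compositionsGE (l + 1) x.2 M, ∏ j, (g j : ℝ) ^ (-p) := by
          simp only [sum_sigma, Fin.prod_univ_succ, Fin.cons_zero, Fin.cons_succ, mul_sum]
      _ ≤ ∑ x ∈ S, (x.1 : ℝ) ^ (-p) * (c ^ l / M ^ ((l : ℝ) * (p - 1)) * (x.2 : ℝ) ^ (-p)) := by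
          gcongr with x
          exact ih x.2
      _ = c ^ l / M ^ ((l : ℝ) * (p - 1)) * ∑ x ∈ S, (x.1 : ℝ) ^ (-p) * (x.2 : ℝ) ^ (-p) := by
          rw [mul_sum]; exact sum_congr rfl fun _ _ => by ring
      _ ≤ c ^ l / M ^ ((l : ℝ) * (p - 1)) * (c * M ^ (1 - p) * (t : ℝ) ^ (-p)) := by
          gcongr
          exact sum_antidiagonal_rpow_neg_mul_le hp hM t
      _ = c ^ (l + 1) / M ^ (((l + 1 : ℕ) : ℝ) * (p - 1)) * (t : ℝ) ^ (-p) := by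
          rw [show ((l + 1 : ℕ) : ℝ) * (p - 1) = l * (p - 1) + (p - 1) by push_cast; ring,
            Real.rpow_add hM, show 1 - p = -(p - 1) by ring, Real.rpow_neg hM.le]
          ring

open DPoly in
/-- A calculus estimate (Lemma B.1). -/
theorem statement19 (d : ℕ) (hd : 3 ≤ d) :
    ∃ c > (0 : ℝ), ∀ t : ℕ, 1 ≤ t → ∀ (l : ℕ) (M : ℝ), 0 < M →
      ∑ f ∈ (Fintype.piFinset fun _ : Fin (l + 1) => Finset.range (t + 1)).filter
          (fun f => (∀ j, 1 ≤ f j) ∧ (∑ j, f j) = t ∧ ∀ j, M ≤ (f j : ℝ)),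
        ∏ j, (f j : ℝ) ^ (-(d : ℝ) / 2) ≤
      c ^ l / M ^ ((l : ℝ) * ((d : ℝ) / 2 - 1)) * (t : ℝ) ^ (-(d : ℝ) / 2) := by
  have hp : 1 < (d : ℝ) / 2 := by
    have : (3 : ℝ) ≤ d := by exact_mod_cast hd
    linarith
  refine ⟨2 * 2 ^ ((d : ℝ) / 2) * ((d : ℝ) / 2 / ((d : ℝ) / 2 - 1)),
    mul_pos (by positivity) (div_pos (by linarith) (by linarith)), fun t _ l M hM => ?_⟩
  rw [neg_div]
  exact sum_compositionsGE_prod_rpow_neg_le hp hM l t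
end
end
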